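/- Let N ≥ 2 and K ≥ 1, and let (w, P) be a configuration with confidence e. Then the Gini index impurity satisfies ∑_{k ∈ Fin K} w k · ∑_{i ∈ Fin N} P k i · (1 − P k i) ≤ (1 − e)·(1 + e − (1−e)/(N−1)); in particular it is at most 1 − e². (Paper's Theorem 1 specialized to the Gini impurity, together with the identity u(e)/l(e) = 1 + e − (1−e)/(N−1) from Theorem 6.) -/

import Mathlib

open Finset

/-- The maximum of a real-valued vector over the finite index set `Fin N` (`N > 0`). -/
noncomputable def colMax {N : ℕ} (hN : 0 < N) (v : Fin N → ℝ) : ℝ :=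
  Finset.univ.sup' (Finset.univ_nonempty_iff.mpr ⟨⟨0, hN⟩⟩) v

/-! Since a row sums to one, its Gini impurity is `1 - ∑ pᵢ²`. Cauchy–Schwarz on the entries other
than the maximum `m` gives `∑ pᵢ² ≥ m² + (1 - m)² / (N - 1)`; the right-hand side is convex in `m`,
so Jensen's inequality over the weights bounds the impurity by `1 - e² - (1 - e)² / (N - 1)`, which
factors as `(1 - e) * (1 + e - (1 - e) / (N - 1))`. -/

lemma exists_colMax_eq {N : ℕ} (hN : 0 < N) (v : Fin N → ℝ) : ∃ i, colMax hN v = v i := by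
  obtain ⟨i, -, hi⟩ := exists_mem_eq_sup' (univ_nonempty_iff.mpr ⟨⟨0, hN⟩⟩) v
  exact ⟨i, hi⟩

lemma sum_mul_one_sub_self_eq {ι : Type*} (s : Finset ι) {p : ι → ℝ} (hp : ∑ i ∈ s, p i = 1) :
    ∑ i ∈ s, p i * (1 - p i) = 1 - ∑ i ∈ s, p i ^ 2 := by
  simp only [mul_one_sub, ← sq, sum_sub_distrib, hp]

lemma sq_add_one_sub_sq_div_le_sum_sq {ι : Type*} [Fintype ι] [DecidableEq ι] {p : ι → ℝ}
    (hp : ∑ i, p i = 1) (j : ι) :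
    p j ^ 2 + (1 - p j) ^ 2 / (Fintype.card ι - 1) ≤ ∑ i, p i ^ 2 := by
  have hrest : ∑ i ∈ univ.erase j, p i = 1 - p j := by
    rw [← hp, ← add_sum_erase univ p (mem_univ j), add_sub_cancel_left]
  have hcard : ((#(univ.erase j) : ℕ) : ℝ) = Fintype.card ι - 1 := by
    rw [card_erase_of_mem (mem_univ j), card_univ, Nat.cast_pred (Fintype.card_pos_iff.2 ⟨j⟩)]
  have hcs := sq_sum_le_card_mul_sum_sq (s := univ.erase j) (f := p)
  rw [hrest, hcard] at hcs
  have hdiv : (1 - p j) ^ 2 / (Fintype.card ι - 1) ≤ ∑ i ∈ univ.erase j, p i ^ 2 :=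
    div_le_of_le_mul₀ (by rw [← hcard]; positivity) (sum_nonneg fun i _ => sq_nonneg _)
      (by linarith)
  rw [← add_sum_erase univ (fun i => p i ^ 2) (mem_univ j)]
  gcongr

lemma convexOn_sq_add_one_sub_sq_div {c : ℝ} (hc : 0 ≤ c) :
    ConvexOn ℝ Set.univ fun x : ℝ => x ^ 2 + (1 - x) ^ 2 / c := by
  have hsq : ConvexOn ℝ Set.univ fun x : ℝ => x ^ 2 := even_two.convexOn_pow
  have hshift := hsq.comp_affineMap (AffineMap.const ℝ ℝ (1 : ℝ) - AffineMap.id ℝ ℝ)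
  simpa [Function.comp_def, div_eq_inv_mul, Pi.add_def] using
    hsq.add (hshift.smul (inv_nonneg.2 hc))

/-- Paper's Theorem 1 specialized to the Gini impurity, together with the identity
`u(e)/l(e) = 1 + e - (1-e)/(N-1)` from Theorem 6: the Gini index impurity is at most
`(1 - e) * (1 + e - (1-e)/(N-1))`, in particular at most `1 - e²`. -/
theorem gini_impurity_upper_bound (N K : ℕ) (hN : 2 ≤ N)
    (w : Fin K → ℝ) (hw : ∀ k, 0 ≤ w k) (hws : ∑ k, w k = 1)
    (P : Fin K → Fin N → ℝ) (hPs : ∀ k, ∑ i, P k i = 1)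
    (e : ℝ) (he : e = ∑ k, w k * colMax (by omega) (P k)) :
    (∑ k, w k * ∑ i, P k i * (1 - P k i)) ≤
        (1 - e) * (1 + e - (1 - e) / ((N : ℝ) - 1)) ∧
      (∑ k, w k * ∑ i, P k i * (1 - P k i)) ≤ 1 - e ^ 2 := by
  have hN1 : (0 : ℝ) ≤ N - 1 := by
    rw [sub_nonneg, Nat.one_le_cast]; omega
  set f : ℝ → ℝ := fun x => x ^ 2 + (1 - x) ^ 2 / ((N : ℝ) - 1) with hf
  set m : Fin K → ℝ := fun k => colMax (by omega) (P k)
  have hrow (k : Fin K) : ∑ i, P k i * (1 - P k i) ≤ 1 - f (m k) := by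
    obtain ⟨j, hj⟩ := exists_colMax_eq (by omega) (P k)
    have hsq := sq_add_one_sub_sq_div_le_sum_sq (hPs k) j
    rw [Fintype.card_fin] at hsq
    rw [sum_mul_one_sub_self_eq _ (hPs k)]
    simp only [hf, m, hj]
    linarith
  have hjensen : f e ≤ ∑ k, w k * f (m k) := by
    simpa [he] using (convexOn_sq_add_one_sub_sq_div hN1).map_sum_le (fun k _ => hw k) hws
      (p := m) (fun _ _ => Set.mem_univ _)
  have hgini : ∑ k, w k * ∑ i, P k i * (1 - P k i) ≤ 1 - f e :=
    calc ∑ k, w k * ∑ i, P k i * (1 - P k i)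
        ≤ ∑ k, w k * (1 - f (m k)) :=
          sum_le_sum fun k _ => mul_le_mul_of_nonneg_left (hrow k) (hw k)
      _ = 1 - ∑ k, w k * f (m k) := by simp only [mul_one_sub, sum_sub_distrib, hws]
      _ ≤ 1 - f e := by linarith
  refine ⟨hgini.trans_eq (by ring), hgini.trans ?_⟩
  have : 0 ≤ (1 - e) ^ 2 / ((N : ℝ) - 1) := by positivity
  simp only [hf]
  linarith
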